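/- For all integers n ≥ 2, the Gaussian q-binomial identity [n-k choose k]_q = [n-1-k choose k]_q + q^(n-2k)·[n-1-k choose k-1]_q (for 1 ≤ k and 2k ≤ n) yields, after summation against (-1)^k q^(k(k-1)) z^k over 0 ≤ k ≤ n/2, the identity λ(n) = λ(n-1) − z·q^(n-2)·λ(n-2), where λ(j) = Σ_{0 ≤ k ≤ j/2} [j-k choose k]_q · (-1)^k · q^(k(k-1)) · z^k. -/
import Mathlib


/-- The Gaussian `q`-binomial coefficient `[m choose k]_q`, defined via the
Pascal-type recursion `[m choose k]_q = [m-1 choose k]_q + q^(m-k)·[m-1 choose k-1]_q`. -/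
def qbinom {R : Type*} [CommRing R] (q : R) : ℕ → ℕ → R
  | _, 0 => 1
  | 0, _ + 1 => 0
  | n + 1, k + 1 => qbinom q n (k + 1) + q ^ (n - k) * qbinom q n k

/-- `λ(j) = Σ_{0 ≤ k ≤ j/2} [j-k choose k]_q · (-1)^k · q^(k(k-1)) · z^k`. -/
def lam {R : Type*} [CommRing R] (q z : R) (j : ℕ) : R :=
  ∑ k ∈ Finset.range (j / 2 + 1),
    qbinom q (j - k) k * (-1 : R) ^ k * q ^ (k * (k - 1)) * z ^ k

lemma qbinom_eq_zero {R : Type*} [CommRing R] (q : R) : ∀ m k : ℕ, m < k → qbinom q m k = 0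
  | 0, _ + 1, _ => rfl
  | m + 1, k + 1, h => by
    show qbinom q m (k+1) + q ^ (m - k) * qbinom q m k = 0
    rw [qbinom_eq_zero q m (k+1) (by omega), qbinom_eq_zero q m k (by omega)]
    ring

lemma exp_eq (m k : ℕ) (h : 2*k ≤ m) : m - k - k + (k+1)*k = m + k*(k-1) := by
  obtain ⟨d, rfl⟩ : ∃ d, m = 2*k + d := ⟨m - 2*k, by omega⟩
  cases k with
  | zero => simp
  | succ j =>
    have h1 : 2*(j+1) + d - (j+1) - (j+1) = d := by omega
    rw [h1, Nat.succ_sub_one]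
    ring

/-- The Gaussian `q`-binomial identity
`[n-k choose k]_q = [n-1-k choose k]_q + q^(n-2k)·[n-1-k choose k-1]_q`
(for `1 ≤ k`, `2k ≤ n`) yields, after summation against `(-1)^k q^(k(k-1)) z^k`,
the identity `λ(n) = λ(n-1) − z·q^(n-2)·λ(n-2)` for `n ≥ 2`. -/
theorem qbinom_identity_and_lam_recursion {R : Type*} [CommRing R] (q z : R)
    (n : ℕ) (hn : 2 ≤ n) :
    (∀ k : ℕ, 1 ≤ k → 2 * k ≤ n →
      qbinom q (n - k) k =
        qbinom q (n - 1 - k) k + q ^ (n - 2 * k) * qbinom q (n - 1 - k) (k - 1)) ∧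
    lam q z n = lam q z (n - 1) - z * q ^ (n - 2) * lam q z (n - 2) := by
  obtain ⟨m, rfl⟩ : ∃ m, n = m + 2 := ⟨n - 2, by omega⟩
  have hrec : ∀ (a b : ℕ), qbinom q (a+1) (b+1)
      = qbinom q a (b+1) + q ^ (a - b) * qbinom q a b := fun a b => rfl
  refine ⟨?_, ?_⟩
  · intro k hk hk2
    obtain ⟨j, rfl⟩ : ∃ j, k = j + 1 := ⟨k - 1, by omega⟩
    have h1 : m + 2 - (j + 1) = (m - j) + 1 := by omega
    have h2 : m + 2 - 1 - (j + 1) = m - j := by omega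
    have h3 : m + 2 - 2 * (j + 1) = m - j - j := by omega
    have h4 : j + 1 - 1 = j := rfl
    rw [h1, h2, h3, h4, hrec]
  · have e1 : m + 2 - 1 = m + 1 := rfl
    have e2 : m + 2 - 2 = m := rfl
    rw [e1, e2]
    have hd : (m + 2) / 2 + 1 = (m / 2 + 1) + 1 := by omega
    rw [show lam q z (m+2) = ∑ k ∈ Finset.range ((m+2)/2 + 1),
      qbinom q (m+2 - k) k * (-1 : R) ^ k * q ^ (k * (k - 1)) * z ^ k from rfl,
      hd, Finset.sum_range_succ']
    have key : ∀ k ∈ Finset.range (m / 2 + 1),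
        qbinom q (m + 2 - (k+1)) (k+1) * (-1:R)^(k+1) * q ^ ((k+1)*((k+1)-1)) * z^(k+1)
        = qbinom q (m - k) (k+1) * (-1:R)^(k+1) * q ^ ((k+1)*k) * z^(k+1)
          + (- (z * q ^ m * (qbinom q (m - k) k * (-1:R)^k * q ^ (k*(k-1)) * z^k))) := by
      intro k hk
      simp only [Finset.mem_range] at hk
      have hk2 : 2 * k ≤ m := by omega
      have h5 : m + 2 - (k+1) = (m - k) + 1 := by omega
      have h6 : (k+1) - 1 = k := rfl
      rw [h5, h6, hrec]
      have hq : q^(m-k-k) * q^((k+1)*k) = q^m * q^(k*(k-1)) := by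
        rw [← pow_add, ← pow_add, exp_eq m k hk2]
      linear_combination (-(qbinom q (m-k) k * (-1:R)^k * z^k * z)) * hq
    rw [Finset.sum_congr rfl key, Finset.sum_add_distrib]
    have hF0 : qbinom q (m + 2 - 0) 0 * (-1:R) ^ 0 * q ^ (0 * (0 - 1)) * z ^ 0 = 1 := by
      simp [qbinom]
    have hB : (∑ k ∈ Finset.range (m/2 + 1),
        (- (z * q ^ m * (qbinom q (m - k) k * (-1:R)^k * q ^ (k*(k-1)) * z^k))))
        = - (z * q ^ m * lam q z m) := by
      rw [lam, Finset.mul_sum, ← Finset.sum_neg_distrib]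
    have hA : (∑ k ∈ Finset.range (m/2 + 1),
        qbinom q (m - k) (k+1) * (-1:R)^(k+1) * q ^ ((k+1)*k) * z^(k+1)) + 1
        = lam q z (m+1) := by
      rw [lam]
      conv_rhs => rw [Finset.sum_range_succ']
      have hG0 : qbinom q (m + 1 - 0) 0 * (-1:R) ^ 0 * q ^ (0 * (0 - 1)) * z ^ 0 = 1 := by
        simp [qbinom]
      rw [hG0]
      congr 1
      rcases Nat.even_or_odd m with ⟨t, rfl⟩ | ⟨t, rfl⟩
      · have h8 : (t + t + 1) / 2 = (t + t) / 2 := by omega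
        rw [Finset.sum_range_succ, h8]
        have hz : qbinom q (t + t - (t+t)/2) ((t+t)/2 + 1) = 0 :=
          qbinom_eq_zero q _ _ (by omega)
        rw [hz, zero_mul, zero_mul, zero_mul, add_zero]
        refine Finset.sum_congr rfl fun k _ => ?_
        rw [show t + t + 1 - (k + 1) = t + t - k from by omega, Nat.add_sub_cancel]
      · have h8 : (2 * t + 1 + 1) / 2 = (2 * t + 1) / 2 + 1 := by omega
        rw [h8]
        refine Finset.sum_congr rfl fun k _ => ?_
        rw [show 2 * t + 1 + 1 - (k + 1) = 2 * t + 1 - k from by omega, Nat.add_sub_cancel]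
    rw [hF0, hB]
    linear_combination hA
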